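/- arXiv:2412.09455 — 3 statements merged into one kernel-verified Lean document; each statement's English description precedes it below -/
import Mathlib

section
/- Korovkin's theorem: if (φ_n) is a sequence of positive linear maps from C[0,1] to C[0,1] such that lim_{n→∞} ‖φ_n(g) − g‖_∞ = 0 for each g in {1, x, x²}, then lim_{n→∞} ‖φ_n(f) − f‖_∞ = 0 for every f ∈ C[0,1]. -/
set_option maxHeartbeats 1000000

open Filter
open scoped ComplexOrder

/-- The function `t ↦ t` as a continuous complex-valued map on `[0,1]`. -/
noncomputable def korovkinX : C(Set.Icc (0:ℝ) 1, ℂ) :=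
  ⟨fun t => ((t : ℝ) : ℂ), Complex.continuous_ofReal.comp continuous_subtype_val⟩

/-- A real continuous map viewed as a complex one. -/
noncomputable def korovkinToC (u : C(Set.Icc (0:ℝ) 1, ℝ)) : C(Set.Icc (0:ℝ) 1, ℂ) :=
  ⟨fun t => ((u t : ℝ) : ℂ), Complex.continuous_ofReal.comp u.continuous⟩

@[simp] lemma korovkinToC_apply (u : C(Set.Icc (0:ℝ) 1, ℝ)) (t : Set.Icc (0:ℝ) 1) :
    korovkinToC u t = ((u t : ℝ) : ℂ) := rfl

lemma korovkin_norm_le_of_between {z w : ℂ} (h1 : -w ≤ z) (h2 : z ≤ w) : ‖z‖ ≤ ‖w‖ := by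
  rw [Complex.le_def] at h1 h2
  simp only [Complex.neg_re, Complex.neg_im] at h1
  have hwim : w.im = 0 := by linarith [h1.2, h2.2]
  have hzim : z.im = 0 := by linarith [h2.2]
  have hz : z = ((z.re : ℝ) : ℂ) := Complex.ext rfl (by simp [hzim])
  have hw : w = ((w.re : ℝ) : ℂ) := Complex.ext rfl (by simp [hwim])
  rw [hz, hw, Complex.norm_real, Complex.norm_real]
  rw [Real.norm_eq_abs, Real.norm_eq_abs]
  have hw0 : 0 ≤ w.re := by linarith [h1.1, h2.1]
  rw [abs_of_nonneg hw0]
  exact abs_le.mpr ⟨by linarith [h1.1], h2.1⟩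

lemma korovkin_mono
    (ψ : C(Set.Icc (0:ℝ) 1, ℂ) →ₗ[ℂ] C(Set.Icc (0:ℝ) 1, ℂ))
    (hpos : ∀ f : C(Set.Icc (0:ℝ) 1, ℂ), (∀ x, 0 ≤ f x) → ∀ x, 0 ≤ (ψ f) x)
    {f g : C(Set.Icc (0:ℝ) 1, ℂ)} (h : ∀ x, f x ≤ g x) :
    ∀ x, (ψ f) x ≤ (ψ g) x := by
  intro x
  have h0 : ∀ y, 0 ≤ (g - f) y := fun y => by
    simpa [sub_nonneg] using h y
  have := hpos (g - f) h0 x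
  rw [map_sub] at this
  simpa [sub_nonneg] using this

/-- Korovkin's theorem for real-valued functions. -/
lemma korovkin_real
    (φ : ℕ → (C(Set.Icc (0:ℝ) 1, ℂ) →ₗ[ℂ] C(Set.Icc (0:ℝ) 1, ℂ)))
    (hpos : ∀ (n : ℕ) (f : C(Set.Icc (0:ℝ) 1, ℂ)),
      (∀ x, 0 ≤ f x) → ∀ x, 0 ≤ (φ n f) x)
    (h1 : Tendsto (fun n => ‖φ n 1 - 1‖) atTop (nhds 0))
    (hx : Tendsto (fun n => ‖φ n korovkinX - korovkinX‖) atTop (nhds 0))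
    (hx2 : Tendsto (fun n => ‖φ n (korovkinX * korovkinX) - korovkinX * korovkinX‖)
      atTop (nhds 0))
    (u : C(Set.Icc (0:ℝ) 1, ℝ)) :
    Tendsto (fun n => ‖φ n (korovkinToC u) - korovkinToC u‖) atTop (nhds 0) := by
  rw [Metric.tendsto_nhds]
  intro ε hε
  -- uniform continuity
  obtain ⟨δ, hδ, hδ'⟩ := Metric.uniformContinuous_iff.mp
    (CompactSpace.uniformContinuous_of_continuous u.continuous) (ε/4) (by positivity)
  set M : ℝ := ‖u‖ with hM
  have hM0 : 0 ≤ M := norm_nonneg u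
  set C : ℝ := 2 * M / δ ^ 2 with hC
  have hC0 : 0 ≤ C := by positivity
  -- key real inequality
  have hkey : ∀ s t : Set.Icc (0:ℝ) 1,
      |u s - u t| ≤ ε/4 + C * ((s:ℝ) - (t:ℝ))^2 := by
    intro s t
    by_cases hst : dist s t < δ
    · have := hδ' hst
      rw [Real.dist_eq] at this
      nlinarith [sq_nonneg ((s:ℝ) - (t:ℝ))]
    · push_neg at hst
      rw [Subtype.dist_eq, Real.dist_eq] at hst
      have h1 : δ^2 ≤ ((s:ℝ) - (t:ℝ))^2 := by
        have := abs_nonneg ((s:ℝ) - (t:ℝ))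
        nlinarith [sq_abs ((s:ℝ) - (t:ℝ))]
      have h2 : |u s| ≤ M := by
        have := u.norm_coe_le_norm s; simpa [Real.norm_eq_abs] using this
      have h3 : |u t| ≤ M := by
        have := u.norm_coe_le_norm t; simpa [Real.norm_eq_abs] using this
      have h4 : C * δ^2 ≤ C * ((s:ℝ) - (t:ℝ))^2 := by
        apply mul_le_mul_of_nonneg_left h1 hC0
      have h5 : C * δ^2 = 2 * M := by
        rw [hC]; field_simp [hδ.ne']
      have := abs_sub (u s) (u t)
      calc |u s - u t| ≤ |u s| + |u t| := abs_sub _ _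
        _ ≤ 2 * M := by linarith
        _ ≤ C * ((s:ℝ)-(t:ℝ))^2 := by linarith
        _ ≤ ε/4 + C * ((s:ℝ)-(t:ℝ))^2 := by linarith
  set K : ℝ := ε/4 + 4*C + M + 1 with hK
  have hK0 : 0 < K := by positivity
  set η : ℝ := min 1 (ε / (2*K)) with hη
  have hη0 : 0 < η := lt_min one_pos (by positivity)
  have ha := h1.eventually (gt_mem_nhds hη0)
  have hb := hx.eventually (gt_mem_nhds hη0)
  have hc := hx2.eventually (gt_mem_nhds hη0)
  filter_upwards [ha, hb, hc] with n han hbn hcn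
  set a : ℝ := ‖φ n 1 - 1‖ with haa
  set b : ℝ := ‖φ n korovkinX - korovkinX‖ with hbb
  set c : ℝ := ‖φ n (korovkinX * korovkinX) - korovkinX * korovkinX‖ with hcc
  have ha0 : 0 ≤ a := norm_nonneg _
  have hb0 : 0 ≤ b := norm_nonneg _
  have hc0 : 0 ≤ c := norm_nonneg _
  -- pointwise bound
  have hpt : ∀ t : Set.Icc (0:ℝ) 1,
      ‖(φ n (korovkinToC u) - korovkinToC u) t‖ ≤ ε/4 + (ε/4 + 4*C + M) * η := by
    intro t
    set tr : ℝ := (t : ℝ) with htr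
    have ht0 : 0 ≤ tr := t.2.1
    have ht1 : tr ≤ 1 := t.2.2
    -- comparison functions
    set q : C(Set.Icc (0:ℝ) 1, ℂ) := korovkinToC u - ((u t : ℝ) : ℂ) • 1 with hq
    set p : C(Set.Icc (0:ℝ) 1, ℂ) :=
      ((ε/4 : ℝ) : ℂ) • 1 + ((C : ℝ) : ℂ) •
        (korovkinX * korovkinX - ((2*tr : ℝ) : ℂ) • korovkinX + ((tr^2 : ℝ) : ℂ) • 1) with hp
    have hq_apply : ∀ s, q s = ((u s - u t : ℝ) : ℂ) := by
      intro s; simp [hq]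
    have hp_apply : ∀ s : Set.Icc (0:ℝ) 1,
        p s = ((ε/4 + C * ((s:ℝ) - tr)^2 : ℝ) : ℂ) := by
      intro s
      simp only [hp, ContinuousMap.add_apply, ContinuousMap.smul_apply,
        ContinuousMap.sub_apply, ContinuousMap.mul_apply, ContinuousMap.one_apply]
      show (((ε/4:ℝ)):ℂ) * 1 + ((C:ℝ):ℂ) * (((s:ℝ):ℂ) * ((s:ℝ):ℂ)
        - ((2*tr:ℝ):ℂ) * ((s:ℝ):ℂ) + ((tr^2:ℝ):ℂ) * 1) = _
      push_cast
      ring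
    -- pointwise between
    have hub : ∀ s, q s ≤ p s := by
      intro s
      rw [hq_apply, hp_apply]
      have := hkey s t
      have h := (abs_le.mp this).2
      exact_mod_cast h
    have hlb : ∀ s, (-p) s ≤ q s := by
      intro s
      rw [ContinuousMap.neg_apply, hq_apply, hp_apply]
      have := hkey s t
      have h := (abs_le.mp this).1
      have : ((-(ε/4 + C * ((s:ℝ) - tr)^2) : ℝ) : ℂ) ≤ ((u s - u t : ℝ) : ℂ) := by
        exact_mod_cast h
      simpa using this
    -- apply monotonicity
    have hub' := korovkin_mono (φ n) (hpos n) hub t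
    have hlb' := korovkin_mono (φ n) (hpos n) hlb t
    rw [map_neg] at hlb'
    have hbetween : ‖(φ n q) t‖ ≤ ‖(φ n p) t‖ :=
      korovkin_norm_le_of_between (by simpa using hlb') hub'
    -- expand φ n q
    have hqφ : (φ n q) t = (φ n (korovkinToC u)) t - ((u t : ℝ) : ℂ) * (φ n 1) t := by
      rw [hq, map_sub, map_smul]
      simp
    -- expand φ n p : abbreviations for errors
    set A : ℂ := (φ n 1 - 1) t with hA
    set B : ℂ := (φ n korovkinX - korovkinX) t with hB
    set D : ℂ := (φ n (korovkinX * korovkinX) - korovkinX * korovkinX) t with hD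
    have hXt : korovkinX t = ((tr : ℝ) : ℂ) := rfl
    have hA' : (φ n 1) t = 1 + A := by simp [hA]
    have hB' : (φ n korovkinX) t = ((tr:ℝ):ℂ) + B := by
      simp [hB, hXt]
    have hD' : (φ n (korovkinX * korovkinX)) t = ((tr:ℝ):ℂ)^2 + D := by
      have : (korovkinX * korovkinX) t = ((tr:ℝ):ℂ)^2 := by
        simp [ContinuousMap.mul_apply, hXt]; ring
      simp [hD, this]
    have hpφ : (φ n p) t = ((ε/4 : ℝ):ℂ) * (1 + A) +
        ((C:ℝ):ℂ) * (D - ((2*tr : ℝ):ℂ) * B + ((tr^2 : ℝ):ℂ) * A) := by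
      rw [hp]
      rw [map_add, map_smul, map_smul, map_add, map_sub, map_smul, map_smul]
      simp only [ContinuousMap.add_apply, ContinuousMap.smul_apply, ContinuousMap.sub_apply,
        smul_eq_mul]
      rw [hA', hB', hD']
      push_cast
      ring
    have hAn : ‖A‖ ≤ a := by rw [hA, haa]; exact ContinuousMap.norm_coe_le_norm _ t
    have hBn : ‖B‖ ≤ b := by rw [hB, hbb]; exact ContinuousMap.norm_coe_le_norm _ t
    have hDn : ‖D‖ ≤ c := by rw [hD, hcc]; exact ContinuousMap.norm_coe_le_norm _ t
    have hpn : ‖(φ n p) t‖ ≤ ε/4 * (1 + a) + C * (c + 2 * b + a) := by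
      rw [hpφ]
      have e1 : ‖((ε/4 : ℝ):ℂ) * (1 + A)‖ ≤ ε/4 * (1 + a) := by
        rw [norm_mul, Complex.norm_real, Real.norm_eq_abs,
          abs_of_nonneg (by positivity : (0:ℝ) ≤ ε/4)]
        have h1a : ‖(1:ℂ)‖ + ‖A‖ ≤ 1 + a := by rw [norm_one]; linarith
        have : ‖(1 : ℂ) + A‖ ≤ 1 + a := le_trans (norm_add_le _ _) h1a
        exact mul_le_mul_of_nonneg_left this (by positivity)
      have e2 : ‖((C:ℝ):ℂ) * (D - ((2*tr : ℝ):ℂ) * B + ((tr^2 : ℝ):ℂ) * A)‖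
          ≤ C * (c + 2*b + a) := by
        rw [norm_mul, Complex.norm_real, Real.norm_eq_abs, abs_of_nonneg hC0]
        have i1 : ‖((2*tr : ℝ):ℂ) * B‖ ≤ 2 * b := by
          rw [norm_mul, Complex.norm_real, Real.norm_eq_abs,
            abs_of_nonneg (by linarith : (0:ℝ) ≤ 2*tr)]
          nlinarith [norm_nonneg B]
        have i2 : ‖((tr^2 : ℝ):ℂ) * A‖ ≤ a := by
          rw [norm_mul, Complex.norm_real, Real.norm_eq_abs,
            abs_of_nonneg (by positivity : (0:ℝ) ≤ tr^2)]
          have htr2 : tr^2 ≤ 1 := by nlinarith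
          nlinarith [norm_nonneg A, mul_le_mul_of_nonneg_right htr2 (norm_nonneg A)]
        have : ‖D - ((2*tr : ℝ):ℂ) * B + ((tr^2 : ℝ):ℂ) * A‖ ≤ c + 2*b + a := by
          calc ‖D - ((2*tr : ℝ):ℂ) * B + ((tr^2 : ℝ):ℂ) * A‖
              ≤ ‖D - ((2*tr : ℝ):ℂ) * B‖ + ‖((tr^2 : ℝ):ℂ) * A‖ := norm_add_le _ _
            _ ≤ (‖D‖ + ‖((2*tr : ℝ):ℂ) * B‖) + ‖((tr^2 : ℝ):ℂ) * A‖ := by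
                have := norm_sub_le D (((2*tr : ℝ):ℂ) * B); linarith
            _ ≤ c + 2*b + a := by linarith
        exact mul_le_mul_of_nonneg_left this hC0
      exact le_trans (norm_add_le _ _) (add_le_add e1 e2)
    -- final pointwise estimate
    have hut : |u t| ≤ M := by
      have := u.norm_coe_le_norm t; simpa [Real.norm_eq_abs] using this
    have hsplit : (φ n (korovkinToC u) - korovkinToC u) t
        = (φ n q) t + ((u t : ℝ) : ℂ) * A := by
      rw [ContinuousMap.sub_apply, hqφ, hA]
      simp only [ContinuousMap.sub_apply, ContinuousMap.one_apply, korovkinToC_apply]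
      ring
    rw [hsplit]
    have huA : ‖((u t : ℝ) : ℂ) * A‖ ≤ M * a := by
      rw [norm_mul, Complex.norm_real, Real.norm_eq_abs]
      exact mul_le_mul hut hAn (norm_nonneg _) hM0
    have hηa : a ≤ η := le_of_lt han
    have hηb : b ≤ η := le_of_lt hbn
    have hηc : c ≤ η := le_of_lt hcn
    have hfinal : ‖(φ n q) t‖ + ‖((u t : ℝ) : ℂ) * A‖
        ≤ ε/4 + (ε/4 + 4*C + M) * η := by
      have hη1 : η ≤ 1 := min_le_left _ _
      have hchain : ‖(φ n q) t‖ ≤ ε/4 * (1 + a) + C * (c + 2*b + a) :=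
        le_trans hbetween hpn
      nlinarith [hε.le]
    exact le_trans (norm_add_le _ _) hfinal
  -- sup norm bound
  have hsup : ‖φ n (korovkinToC u) - korovkinToC u‖ ≤ ε/4 + (ε/4 + 4*C + M) * η := by
    apply ContinuousMap.norm_le _ (by positivity) |>.mpr
    exact hpt
  -- conclude
  have hηK : (ε/4 + 4*C + M) * η ≤ ε/2 := by
    have h2 : η ≤ ε / (2*K) := min_le_right _ _
    have h3 : (ε/4 + 4*C + M) * η ≤ K * η := by
      apply mul_le_mul_of_nonneg_right _ hη0.le
      rw [hK]; linarith
    have h4 : K * η ≤ K * (ε / (2*K)) := mul_le_mul_of_nonneg_left h2 hK0.le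
    have h5 : K * (ε / (2*K)) = ε/2 := by field_simp
    linarith
  rw [Real.dist_eq, sub_zero, abs_of_nonneg (norm_nonneg _)]
  calc ‖φ n (korovkinToC u) - korovkinToC u‖ ≤ ε/4 + (ε/4 + 4*C + M) * η := hsup
    _ ≤ ε/4 + ε/2 := by linarith
    _ < ε := by linarith

/-- **Korovkin's theorem.** If a sequence of positive linear maps on `C[0,1]` converges in norm
to the identity on the test functions `1`, `x` and `x²`, then it converges to the identity on
every `f ∈ C[0,1]`. -/
theorem korovkin
    (φ : ℕ → (C(Set.Icc (0:ℝ) 1, ℂ) →ₗ[ℂ] C(Set.Icc (0:ℝ) 1, ℂ)))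
    (hpos : ∀ (n : ℕ) (f : C(Set.Icc (0:ℝ) 1, ℂ)),
      (∀ x, 0 ≤ f x) → ∀ x, 0 ≤ (φ n f) x)
    (h1 : Tendsto (fun n => ‖φ n 1 - 1‖) atTop (nhds 0))
    (hx : Tendsto (fun n => ‖φ n korovkinX - korovkinX‖) atTop (nhds 0))
    (hx2 : Tendsto (fun n => ‖φ n (korovkinX * korovkinX) - korovkinX * korovkinX‖)
      atTop (nhds 0)) :
    ∀ f : C(Set.Icc (0:ℝ) 1, ℂ),
      Tendsto (fun n => ‖φ n f - f‖) atTop (nhds 0) := by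
  intro f
  set u : C(Set.Icc (0:ℝ) 1, ℝ) := ⟨fun t => (f t).re, Complex.continuous_re.comp f.continuous⟩ with hu
  set v : C(Set.Icc (0:ℝ) 1, ℝ) := ⟨fun t => (f t).im, Complex.continuous_im.comp f.continuous⟩ with hv
  have hf : f = korovkinToC u + Complex.I • korovkinToC v := by
    ext t
    simp only [ContinuousMap.add_apply, ContinuousMap.smul_apply, korovkinToC_apply,
      smul_eq_mul, hu, hv, ContinuousMap.coe_mk]
    rw [mul_comm]
    exact (Complex.re_add_im (f t)).symm
  have hU := korovkin_real φ hpos h1 hx hx2 u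
  have hV := korovkin_real φ hpos h1 hx hx2 v
  have hbound : ∀ n, ‖φ n f - f‖ ≤
      ‖φ n (korovkinToC u) - korovkinToC u‖ + ‖φ n (korovkinToC v) - korovkinToC v‖ := by
    intro n
    have : φ n f - f = (φ n (korovkinToC u) - korovkinToC u)
        + Complex.I • (φ n (korovkinToC v) - korovkinToC v) := by
      rw [hf, map_add, map_smul, smul_sub]
      abel
    rw [this]
    calc ‖_‖ ≤ ‖φ n (korovkinToC u) - korovkinToC u‖
          + ‖Complex.I • (φ n (korovkinToC v) - korovkinToC v)‖ := norm_add_le _ _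
      _ ≤ _ := by
          have hs : ‖Complex.I • (φ n (korovkinToC v) - korovkinToC v)‖
              ≤ ‖φ n (korovkinToC v) - korovkinToC v‖ := by
            simpa using norm_smul_le Complex.I (φ n (korovkinToC v) - korovkinToC v)
          linarith
  have hsum : Tendsto (fun n => ‖φ n (korovkinToC u) - korovkinToC u‖
      + ‖φ n (korovkinToC v) - korovkinToC v‖) atTop (nhds 0) := by
    simpa using hU.add hV
  exact squeeze_zero (fun n => norm_nonneg _) hbound hsum
end

section
/- Wold-type decomposition for row contractions: let (T₁, T₂) be a row contraction on a complex Hilbert space H. Then there is a unique closed subspace M ⊆ H reducing for both T₁ and T₂ such that the restriction (T₁|_M, T₂|_M) is a row unitary on M and the restriction of (T₁, T₂) to M^⊥ has no nonzero reducing subspace on which it restricts to a row unitary. -/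
open ContinuousLinearMap

variable {H : Type*} [NormedAddCommGroup H] [InnerProductSpace ℂ H] [CompleteSpace H]

/-- A closed subspace `M` is *reducing* for the pair `(T₁, T₂)` if it is invariant under
`T₁, T₂, T₁*, T₂*`. -/
def IsReducing (T₁ T₂ : H →L[ℂ] H) (M : Submodule ℂ H) : Prop :=
  ∀ x ∈ M, T₁ x ∈ M ∧ T₂ x ∈ M ∧ adjoint T₁ x ∈ M ∧ adjoint T₂ x ∈ M

/-- The restriction of the pair `(T₁, T₂)` to a reducing subspace `M` is a *row unitary*:
the restrictions are isometries with orthogonal ranges whose range projections sum to the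
identity of `M`. -/
def IsRowUnitaryOn (T₁ T₂ : H →L[ℂ] H) (M : Submodule ℂ H) : Prop :=
  ∀ x ∈ M, adjoint T₁ (T₁ x) = x ∧ adjoint T₂ (T₂ x) = x ∧
    adjoint T₁ (T₂ x) = 0 ∧ adjoint T₂ (T₁ x) = 0 ∧
    T₁ (adjoint T₁ x) + T₂ (adjoint T₂ x) = x

namespace WoldAux

variable (T₁ T₂ : H →L[ℂ] H)

/-- The four generating operators. -/
noncomputable def op : Fin 4 → (H →L[ℂ] H) :=
  ![T₁, T₂, adjoint T₁, adjoint T₂]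

/-- The subspace where the row-unitary identities hold pointwise. -/
noncomputable def K : Submodule ℂ H :=
  LinearMap.ker ((adjoint T₁ ∘L T₁ - 1 : H →L[ℂ] H) : H →ₗ[ℂ] H) ⊓ LinearMap.ker ((adjoint T₂ ∘L T₂ - 1 : H →L[ℂ] H) : H →ₗ[ℂ] H) ⊓
  LinearMap.ker ((adjoint T₁ ∘L T₂ : H →L[ℂ] H) : H →ₗ[ℂ] H) ⊓ LinearMap.ker ((adjoint T₂ ∘L T₁ : H →L[ℂ] H) : H →ₗ[ℂ] H) ⊓
  LinearMap.ker ((T₁ ∘L adjoint T₁ + T₂ ∘L adjoint T₂ - 1 : H →L[ℂ] H) : H →ₗ[ℂ] H)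

lemma mem_K_iff (x : H) : x ∈ K T₁ T₂ ↔
    adjoint T₁ (T₁ x) = x ∧ adjoint T₂ (T₂ x) = x ∧
    adjoint T₁ (T₂ x) = 0 ∧ adjoint T₂ (T₁ x) = 0 ∧
    T₁ (adjoint T₁ x) + T₂ (adjoint T₂ x) = x := by
  simp only [K, Submodule.mem_inf, LinearMap.mem_ker, ContinuousLinearMap.coe_sub',
    Pi.sub_apply, ContinuousLinearMap.coe_comp', Function.comp_apply,
    ContinuousLinearMap.one_apply, sub_eq_zero, ContinuousLinearMap.add_apply,
    ContinuousLinearMap.coe_coe]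
  tauto

lemma isClosed_K : IsClosed (K T₁ T₂ : Set H) := by
  have : (K T₁ T₂ : Set H) =
      (LinearMap.ker ((adjoint T₁ ∘L T₁ - 1 : H →L[ℂ] H) : H →ₗ[ℂ] H) : Set H) ∩
      (LinearMap.ker ((adjoint T₂ ∘L T₂ - 1 : H →L[ℂ] H) : H →ₗ[ℂ] H) : Set H) ∩
      (LinearMap.ker ((adjoint T₁ ∘L T₂ : H →L[ℂ] H) : H →ₗ[ℂ] H) : Set H) ∩
      (LinearMap.ker ((adjoint T₂ ∘L T₁ : H →L[ℂ] H) : H →ₗ[ℂ] H) : Set H) ∩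
      (LinearMap.ker ((T₁ ∘L adjoint T₁ + T₂ ∘L adjoint T₂ - 1 : H →L[ℂ] H) : H →ₗ[ℂ] H) : Set H) := by
    simp [K]
  rw [this]
  exact ((((isClosed_ker _).inter (isClosed_ker _)).inter (isClosed_ker _)).inter
    (isClosed_ker _)).inter (isClosed_ker _)

/-- Word operators. -/
noncomputable def wrd (w : List (Fin 4)) : H →L[ℂ] H :=
  w.foldr (fun i f => op T₁ T₂ i ∘L f) 1

lemma wrd_nil : wrd T₁ T₂ [] = 1 := rfl

lemma wrd_cons (i : Fin 4) (w : List (Fin 4)) :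
    wrd T₁ T₂ (i :: w) = op T₁ T₂ i ∘L wrd T₁ T₂ w := rfl

lemma wrd_append_single (w : List (Fin 4)) (i : Fin 4) (x : H) :
    wrd T₁ T₂ (w ++ [i]) x = wrd T₁ T₂ w (op T₁ T₂ i x) := by
  induction w with
  | nil => rfl
  | cons j w ih =>
      simp only [List.cons_append, wrd_cons, ContinuousLinearMap.comp_apply, ih]

/-- The maximal reducing subspace on which `(T₁,T₂)` is a row unitary. -/
noncomputable def Mmax : Submodule ℂ H :=
  ⨅ w : List (Fin 4), (K T₁ T₂).comap ((wrd T₁ T₂ w : H →L[ℂ] H) : H →ₗ[ℂ] H)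

lemma mem_Mmax_iff (x : H) : x ∈ Mmax T₁ T₂ ↔ ∀ w, wrd T₁ T₂ w x ∈ K T₁ T₂ := by
  simp [Mmax, Submodule.mem_iInf, Submodule.mem_comap]

lemma isClosed_Mmax : IsClosed ((Mmax T₁ T₂ : Submodule ℂ H) : Set H) := by
  have : ((Mmax T₁ T₂ : Submodule ℂ H) : Set H) =
      ⋂ w : List (Fin 4), (wrd T₁ T₂ w) ⁻¹' (K T₁ T₂ : Set H) := by
    ext x
    simp [mem_Mmax_iff]
  rw [this]
  exact isClosed_iInter fun w => (isClosed_K T₁ T₂).preimage (wrd T₁ T₂ w).continuous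

lemma op_mem_Mmax {x : H} (hx : x ∈ Mmax T₁ T₂) (i : Fin 4) :
    op T₁ T₂ i x ∈ Mmax T₁ T₂ := by
  rw [mem_Mmax_iff] at hx ⊢
  intro w
  rw [← wrd_append_single]
  exact hx _

lemma isReducing_Mmax : IsReducing T₁ T₂ (Mmax T₁ T₂) := by
  intro x hx
  refine ⟨?_, ?_, ?_, ?_⟩
  · simpa [op] using op_mem_Mmax T₁ T₂ hx 0
  · simpa [op] using op_mem_Mmax T₁ T₂ hx 1
  · simpa [op] using op_mem_Mmax T₁ T₂ hx 2
  · simpa [op] using op_mem_Mmax T₁ T₂ hx 3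

lemma isRowUnitaryOn_Mmax : IsRowUnitaryOn T₁ T₂ (Mmax T₁ T₂) := by
  intro x hx
  have := (mem_Mmax_iff T₁ T₂ x).mp hx []
  rw [wrd_nil] at this
  exact (mem_K_iff T₁ T₂ x).mp this

/-- Maximality: any reducing row-unitary subspace is contained in `Mmax`. -/
lemma le_Mmax (N : Submodule ℂ H) (hred : IsReducing T₁ T₂ N)
    (hru : IsRowUnitaryOn T₁ T₂ N) : N ≤ Mmax T₁ T₂ := by
  have hop : ∀ i : Fin 4, ∀ x ∈ N, op T₁ T₂ i x ∈ N := by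
    intro i x hx
    obtain ⟨h1, h2, h3, h4⟩ := hred x hx
    fin_cases i <;> simpa [op]
  have hNK : N ≤ K T₁ T₂ := fun x hx => (mem_K_iff T₁ T₂ x).mpr (hru x hx)
  intro x hx
  rw [mem_Mmax_iff]
  intro w
  have hw : wrd T₁ T₂ w x ∈ N := by
    induction w with
    | nil => simpa [wrd_nil] using hx
    | cons i w ih =>
        rw [wrd_cons]
        exact hop i _ ih
  exact hNK hw

/-- The orthogonal complement of a reducing subspace is reducing. -/
lemma isReducing_orthogonal (N : Submodule ℂ H) (hred : IsReducing T₁ T₂ N) :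
    IsReducing T₁ T₂ Nᗮ := by
  intro x hx
  refine ⟨?_, ?_, ?_, ?_⟩ <;>
  · rw [Submodule.mem_orthogonal]
    intro u hu
    first
    | · rw [← adjoint_inner_left]
        exact hx _ (hred u hu).2.2.1
    | · rw [← adjoint_inner_left]
        exact hx _ (hred u hu).2.2.2
    | · rw [adjoint_inner_right]
        exact hx _ (hred u hu).1
    | · rw [adjoint_inner_right]
        exact hx _ (hred u hu).2.1

end WoldAux

/-- **Wold-type decomposition for row contractions**: a row contraction `(T₁, T₂)` on a complex
Hilbert space has a unique closed reducing subspace `M` on which it restricts to a row unitary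
and such that its restriction to `Mᗮ` has no nonzero reducing subspace on which it restricts
to a row unitary. -/
theorem wold_decomposition_row_contraction (T₁ T₂ : H →L[ℂ] H)
    (hrow : ((1 : H →L[ℂ] H) -
      (T₁ ∘L adjoint T₁ + T₂ ∘L adjoint T₂)).IsPositive) :
    ∃! M : Submodule ℂ H,
      IsClosed (M : Set H) ∧ IsReducing T₁ T₂ M ∧ IsRowUnitaryOn T₁ T₂ M ∧
      ∀ N : Submodule ℂ H, IsClosed (N : Set H) → N ≤ Mᗮ → IsReducing T₁ T₂ N →
        IsRowUnitaryOn T₁ T₂ N → N = ⊥ := by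
  classical
  refine ⟨WoldAux.Mmax T₁ T₂, ⟨WoldAux.isClosed_Mmax T₁ T₂, WoldAux.isReducing_Mmax T₁ T₂,
    WoldAux.isRowUnitaryOn_Mmax T₁ T₂, ?_⟩, ?_⟩
  · intro N _hNcl hNle hNred hNru
    have h1 : N ≤ WoldAux.Mmax T₁ T₂ := WoldAux.le_Mmax T₁ T₂ N hNred hNru
    have : N ≤ WoldAux.Mmax T₁ T₂ ⊓ (WoldAux.Mmax T₁ T₂)ᗮ := le_inf h1 hNle
    rwa [disjoint_iff.mp (Submodule.orthogonal_disjoint _), le_bot_iff] at this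
  · rintro M' ⟨hM'cl, hM'red, hM'ru, hM'min⟩
    have hM'le : M' ≤ WoldAux.Mmax T₁ T₂ := WoldAux.le_Mmax T₁ T₂ M' hM'red hM'ru
    -- N := Mmax ⊓ M'ᗮ is closed, reducing, row unitary, and ≤ M'ᗮ, so it is ⊥.
    set N : Submodule ℂ H := WoldAux.Mmax T₁ T₂ ⊓ M'ᗮ with hN
    have hNcl : IsClosed (N : Set H) := by
      have : (N : Set H) = (WoldAux.Mmax T₁ T₂ : Set H) ∩ (M'ᗮ : Set H) := rfl
      rw [this]
      exact (WoldAux.isClosed_Mmax T₁ T₂).inter M'.isClosed_orthogonal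
    have hNred : IsReducing T₁ T₂ N := by
      intro x hx
      obtain ⟨hx1, hx2⟩ := hx
      obtain ⟨a1, a2, a3, a4⟩ := WoldAux.isReducing_Mmax T₁ T₂ x hx1
      obtain ⟨b1, b2, b3, b4⟩ := WoldAux.isReducing_orthogonal T₁ T₂ M' hM'red x hx2
      exact ⟨⟨a1, b1⟩, ⟨a2, b2⟩, ⟨a3, b3⟩, ⟨a4, b4⟩⟩
    have hNru : IsRowUnitaryOn T₁ T₂ N := fun x hx =>
      WoldAux.isRowUnitaryOn_Mmax T₁ T₂ x hx.1
    have hNbot : N = ⊥ := hM'min N hNcl inf_le_right hNred hNru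
    -- conclude Mmax ≤ M'
    refine le_antisymm hM'le ?_
    intro x hx
    haveI : CompleteSpace M' := hM'cl.completeSpace_coe
    have hdiff : x - (M'.orthogonalProjectionOnto x : H) ∈ M'ᗮ :=
      by have := M'.sub_starProjection_mem_orthogonal x; rwa [Submodule.starProjection_apply] at this
    have hdiffM : x - (M'.orthogonalProjectionOnto x : H) ∈ WoldAux.Mmax T₁ T₂ :=
      Submodule.sub_mem _ hx (hM'le (M'.orthogonalProjectionOnto x).2)
    have : x - (M'.orthogonalProjectionOnto x : H) ∈ N := ⟨hdiffM, hdiff⟩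
    rw [hNbot, Submodule.mem_bot, sub_eq_zero] at this
    rw [this]
    exact (M'.orthogonalProjectionOnto x).2
end

section
/- Frazho's dilation theorem: every row contraction dilates to a row isometry. That is, if (T₁, T₂) is a row contraction on a complex Hilbert space H, then there exist a Hilbert space K containing H isometrically and a row isometry (V₁, V₂) on K such that H is coinvariant for V₁ and V₂ (i.e., V_i* H ⊆ H) and V_i* x = T_i* x for all x ∈ H and i ∈ {1,2}; in particular, T_i = P_H V_i|_H. -/
open ContinuousLinearMap

universe u

noncomputable section
set_option linter.unusedSectionVars false
set_option maxHeartbeats 1000000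
set_option synthInstance.maxHeartbeats 400000
variable {H : Type u} [NormedAddCommGroup H] [InnerProductSpace ℂ H] [CompleteSpace H]
open scoped ENNReal
local notation "⟪" x ", " y "⟫" => @inner ℂ _ _ x y
namespace Frazho
abbrev E2 (H : Type u) [NormedAddCommGroup H] [InnerProductSpace ℂ H] := WithLp 2 (H × H)
variable (T₁ T₂ : H →L[ℂ] H)
def rowOp : E2 H →L[ℂ] H :=
  (T₁ ∘L ContinuousLinearMap.fst ℂ H H + T₂ ∘L ContinuousLinearMap.snd ℂ H H) ∘L
    (WithLp.prodContinuousLinearEquiv 2 ℂ H H : E2 H →L[ℂ] H × H)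
lemma rowOp_apply (x : E2 H) : rowOp T₁ T₂ x = T₁ x.fst + T₂ x.snd := rfl
def emb (b : Bool) : H →L[ℂ] E2 H :=
  (WithLp.prodContinuousLinearEquiv 2 ℂ H H).symm.toContinuousLinearMap ∘L
    (if b then (0 : H →L[ℂ] H).prod (ContinuousLinearMap.id ℂ H)
     else (ContinuousLinearMap.id ℂ H).prod 0)

variable (hrow : ((1 : H →L[ℂ] H) - (T₁ ∘L adjoint T₁ + T₂ ∘L adjoint T₂)).IsPositive)

lemma adjoint_rowOp_apply (x : H) :
    adjoint (rowOp T₁ T₂) x = emb false (adjoint T₁ x) + emb true (adjoint T₂ x) := by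
  apply ext_inner_right ℂ
  intro y
  rw [adjoint_inner_left]
  rw [inner_add_left, rowOp_apply, inner_add_right]
  congr 1
  · symm
    show ⟪emb (H := H) false ((adjoint T₁) x), y⟫ = ⟪x, T₁ y.fst⟫
    rw [WithLp.prod_inner_apply]
    show ⟪(adjoint T₁) x, y.fst⟫ + ⟪(0 : H), y.snd⟫ = _
    rw [inner_zero_left, add_zero, adjoint_inner_left]
  · symm
    show ⟪emb (H := H) true ((adjoint T₂) x), y⟫ = ⟪x, T₂ y.snd⟫
    rw [WithLp.prod_inner_apply]
    show ⟪(0 : H), y.fst⟫ + ⟪(adjoint T₂) x, y.snd⟫ = _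
    rw [inner_zero_left, zero_add, adjoint_inner_left]

lemma rowOp_comp_adjoint :
    rowOp T₁ T₂ ∘L adjoint (rowOp T₁ T₂) = T₁ ∘L adjoint T₁ + T₂ ∘L adjoint T₂ := by
  ext x
  simp only [comp_apply, adjoint_rowOp_apply, add_apply, map_add, rowOp_apply]
  show T₁ ((adjoint T₁) x) + T₂ (0 : H) + (T₁ (0:H) + T₂ ((adjoint T₂) x)) = _
  simp

include hrow in
lemma norm_adjoint_rowOp_le (x : H) : ‖adjoint (rowOp T₁ T₂) x‖ ≤ ‖x‖ := by
  have h0 := hrow.inner_nonneg_left x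
  rw [ContinuousLinearMap.sub_apply, inner_sub_left, ContinuousLinearMap.one_apply] at h0
  rw [← rowOp_comp_adjoint] at h0
  have h1 : ⟪(rowOp T₁ T₂ ∘L adjoint (rowOp T₁ T₂)) x, x⟫
      = ⟪adjoint (rowOp T₁ T₂) x, adjoint (rowOp T₁ T₂) x⟫ := by
    rw [comp_apply]
    exact (adjoint_inner_right _ _ _).symm
  rw [h1] at h0
  replace h0 := (RCLike.nonneg_iff.mp h0).1
  rw [map_sub] at h0
  have h2 : ‖adjoint (rowOp T₁ T₂) x‖ ^ 2 ≤ ‖x‖ ^ 2 := by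
    rw [← inner_self_eq_norm_sq (𝕜 := ℂ), ← inner_self_eq_norm_sq (𝕜 := ℂ)]
    linarith
  have h3 := Real.sqrt_le_sqrt h2
  rwa [Real.sqrt_sq (norm_nonneg _), Real.sqrt_sq (norm_nonneg _)] at h3

include hrow in
lemma norm_rowOp_apply_le (x : E2 H) : ‖rowOp T₁ T₂ x‖ ≤ ‖x‖ := by
  rcases eq_or_ne (‖rowOp T₁ T₂ x‖) 0 with h | h
  · rw [h]; exact norm_nonneg x
  · have h1 : ‖rowOp T₁ T₂ x‖ * ‖rowOp T₁ T₂ x‖ ≤ ‖x‖ * ‖rowOp T₁ T₂ x‖ := by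
      have : (‖rowOp T₁ T₂ x‖ : ℝ) ^ 2 = RCLike.re ⟪rowOp T₁ T₂ x, rowOp T₁ T₂ x⟫ :=
        (inner_self_eq_norm_sq (𝕜 := ℂ) _).symm
      have h2 : ⟪rowOp T₁ T₂ x, rowOp T₁ T₂ x⟫
          = ⟪x, adjoint (rowOp T₁ T₂) (rowOp T₁ T₂ x)⟫ := by
        rw [adjoint_inner_right]
      have h3 := re_inner_le_norm (𝕜 := ℂ) x (adjoint (rowOp T₁ T₂) (rowOp T₁ T₂ x))
      have h4 := norm_adjoint_rowOp_le T₁ T₂ hrow (rowOp T₁ T₂ x)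
      have key : ‖rowOp T₁ T₂ x‖ ^ 2 ≤ ‖x‖ * ‖rowOp T₁ T₂ x‖ := by
        rw [this, h2]
        exact h3.trans (mul_le_mul_of_nonneg_left h4 (norm_nonneg x))
      calc ‖rowOp T₁ T₂ x‖ * ‖rowOp T₁ T₂ x‖ = ‖rowOp T₁ T₂ x‖ ^ 2 := (pow_two _).symm
        _ ≤ ‖x‖ * ‖rowOp T₁ T₂ x‖ := key
    exact le_of_mul_le_mul_right h1 (lt_of_le_of_ne (norm_nonneg _) (Ne.symm h))

def Adef : E2 H →L[ℂ] E2 H := 1 - adjoint (rowOp T₁ T₂) ∘L rowOp T₁ T₂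

include hrow in
lemma Adef_isPositive : (Adef T₁ T₂).IsPositive := by
  constructor
  · have hsa : IsSelfAdjoint (adjoint (rowOp T₁ T₂) ∘L rowOp T₁ T₂) := by
      rw [IsSelfAdjoint, star_eq_adjoint, adjoint_comp, adjoint_adjoint]
    exact ContinuousLinearMap.isSelfAdjoint_iff_isSymmetric.mp ((IsSelfAdjoint.one (E2 H →L[ℂ] E2 H)).sub hsa)
  · intro x
    rw [reApplyInnerSelf_apply]
    rw [Adef, ContinuousLinearMap.sub_apply, inner_sub_left, ContinuousLinearMap.one_apply, map_sub]
    have h1 : ⟪(adjoint (rowOp T₁ T₂) ∘L rowOp T₁ T₂) x, x⟫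
        = ⟪rowOp T₁ T₂ x, rowOp T₁ T₂ x⟫ := by
      rw [comp_apply, adjoint_inner_left]
    rw [h1, inner_self_eq_norm_sq (𝕜 := ℂ), inner_self_eq_norm_sq (𝕜 := ℂ)]
    have := norm_rowOp_apply_le T₁ T₂ hrow x
    nlinarith [norm_nonneg (rowOp T₁ T₂ x), norm_nonneg x]

def Ddef : E2 H →L[ℂ] E2 H := CFC.sqrt (Adef T₁ T₂)

include hrow in
lemma Ddef_comp : Ddef T₁ T₂ ∘L Ddef T₁ T₂ = Adef T₁ T₂ :=
  CFC.sqrt_mul_sqrt_self _ ((nonneg_iff_isPositive _).2 (Adef_isPositive T₁ T₂ hrow))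

lemma Ddef_selfAdjoint : IsSelfAdjoint (Ddef T₁ T₂) :=
  ((nonneg_iff_isPositive _).1 (CFC.sqrt_nonneg (a := Adef T₁ T₂))).isSelfAdjoint

include hrow in
lemma inner_Ddef (x y : E2 H) :
    ⟪Ddef T₁ T₂ x, Ddef T₁ T₂ y⟫ = ⟪x, y⟫ - ⟪rowOp T₁ T₂ x, rowOp T₁ T₂ y⟫ := by
  have step : ⟪Ddef T₁ T₂ x, Ddef T₁ T₂ y⟫ = ⟪x, Ddef T₁ T₂ (Ddef T₁ T₂ y)⟫ := by
    conv_rhs => rw [← (Ddef_selfAdjoint T₁ T₂).adjoint_eq]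
    rw [adjoint_inner_right]
    rw [(Ddef_selfAdjoint T₁ T₂).adjoint_eq]
  rw [step]
  have : Ddef T₁ T₂ (Ddef T₁ T₂ y) = Adef T₁ T₂ y := by
    rw [← comp_apply, Ddef_comp T₁ T₂ hrow]
  rw [this, Adef, ContinuousLinearMap.sub_apply, inner_sub_right, ContinuousLinearMap.one_apply]
  congr 1
  rw [comp_apply, adjoint_inner_right]

/-! ## The free shift on `ℓ²(List Bool, E2 H)` -/

abbrev Fock (H : Type u) [NormedAddCommGroup H] [InnerProductSpace ℂ H] [CompleteSpace H] :=
  lp (fun _ : List Bool => E2 H) 2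

lemma cons_inj (b : Bool) : Function.Injective (fun w : List Bool => b :: w) :=
  fun _ _ h => (List.cons.injEq b _ b _ ▸ h).2

def shiftFun (b : Bool) (f : List Bool → E2 H) : List Bool → E2 H :=
  Function.extend (fun w => b :: w) f 0

lemma shiftFun_cons_self (b : Bool) (f : List Bool → E2 H) (w : List Bool) :
    shiftFun b f (b :: w) = f w :=
  (cons_inj b).extend_apply f 0 w

lemma shiftFun_not_mem (b : Bool) (f : List Bool → E2 H) {w : List Bool}
    (hw : ¬∃ v, b :: v = w) : shiftFun b f w = 0 :=
  Function.extend_apply' f (0 : List Bool → E2 H) w hw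

lemma shiftFun_nil (b : Bool) (f : List Bool → E2 H) : shiftFun b f [] = 0 :=
  shiftFun_not_mem b f (by rintro ⟨v, h⟩; cases h)

lemma shiftFun_cons_ne {b c : Bool} (h : b ≠ c) (f : List Bool → E2 H) (w : List Bool) :
    shiftFun b f (c :: w) = 0 :=
  shiftFun_not_mem b f (by rintro ⟨v, hv⟩; exact h (List.head_eq_of_cons_eq hv))

lemma memℓp_shiftFun (b : Bool) (f : Fock H) : Memℓp (shiftFun b ⇑f) 2 := by
  have hf : Summable fun w : List Bool => ‖f w‖ ^ (2 : ℝ≥0∞).toReal :=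
    (memℓp_gen_iff (by norm_num)).1 (lp.memℓp f)
  apply memℓp_gen
  have heq : (fun w => ‖shiftFun b (⇑f) w‖ ^ (2 : ℝ≥0∞).toReal)
      = Function.extend (fun w => b :: w) (fun w => ‖f w‖ ^ (2 : ℝ≥0∞).toReal) 0 := by
    funext w
    by_cases hw : ∃ v, b :: v = w
    · obtain ⟨v, rfl⟩ := hw
      rw [shiftFun_cons_self, (cons_inj b).extend_apply]
    · rw [shiftFun_not_mem b _ hw, Function.extend_apply' _ _ _ hw]
      simp only [Pi.zero_apply, norm_zero]
      rw [Real.zero_rpow (by norm_num)]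
  rw [heq]
  exact (summable_extend_zero (cons_inj b)).2 hf

def shiftlp (b : Bool) (f : Fock H) : Fock H := ⟨shiftFun b ⇑f, memℓp_shiftFun b f⟩

lemma shiftlp_coe (b : Bool) (f : Fock H) : ⇑(shiftlp b f) = shiftFun b ⇑f := rfl

lemma shiftlp_add (b : Bool) (f g : Fock H) :
    shiftlp b (f + g) = shiftlp b f + shiftlp b g := by
  apply lp.ext
  rw [lp.coeFn_add, shiftlp_coe, shiftlp_coe, shiftlp_coe, lp.coeFn_add]
  funext w
  by_cases hw : ∃ v, b :: v = w
  · obtain ⟨v, rfl⟩ := hw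
    simp [shiftFun_cons_self]
  · simp [shiftFun_not_mem b _ hw]

lemma shiftlp_smul (b : Bool) (c : ℂ) (f : Fock H) :
    shiftlp b (c • f) = c • shiftlp b f := by
  apply lp.ext
  rw [lp.coeFn_smul, shiftlp_coe, shiftlp_coe, lp.coeFn_smul]
  funext w
  by_cases hw : ∃ v, b :: v = w
  · obtain ⟨v, rfl⟩ := hw
    simp [shiftFun_cons_self]
  · simp [shiftFun_not_mem b _ hw]

lemma inner_shiftlp_same (b : Bool) (f g : Fock H) :
    ⟪shiftlp b f, shiftlp b g⟫ = ⟪f, g⟫ := by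
  rw [lp.inner_eq_tsum, lp.inner_eq_tsum]
  have heq : (fun w => ⟪shiftlp b f w, shiftlp b g w⟫)
      = Function.extend (fun w => b :: w) (fun w => ⟪f w, g w⟫) 0 := by
    funext w
    by_cases hw : ∃ v, b :: v = w
    · obtain ⟨v, rfl⟩ := hw
      rw [(cons_inj b).extend_apply]
      show ⟪shiftFun b (⇑f) (b :: v), shiftFun b (⇑g) (b :: v)⟫ = _
      rw [shiftFun_cons_self, shiftFun_cons_self]
    · rw [Function.extend_apply' _ _ _ hw]
      show ⟪shiftFun b (⇑f) w, shiftFun b (⇑g) w⟫ = _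
      rw [shiftFun_not_mem b _ hw, inner_zero_left]
      rfl
  rw [heq]
  have hsupp : Function.support (Function.extend (fun w : List Bool => b :: w)
      (fun w => ⟪f w, g w⟫) 0) ⊆ Set.range (fun w : List Bool => b :: w) := by
    intro w hw
    by_contra hmem
    apply hw
    rw [Function.extend_apply' _ _ _ (by simpa [Set.range] using hmem)]
    rfl
  rw [← (cons_inj b).tsum_eq hsupp]
  congr 1
  funext v
  rw [(cons_inj b).extend_apply]

lemma inner_shiftlp_ne {b c : Bool} (h : b ≠ c) (f g : Fock H) :
    ⟪shiftlp b f, shiftlp c g⟫ = 0 := by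
  rw [lp.inner_eq_tsum]
  have heq : ∀ w, ⟪shiftlp b f w, shiftlp c g w⟫ = 0 := by
    intro w
    show ⟪shiftFun b (⇑f) w, shiftFun c (⇑g) w⟫ = 0
    match w with
    | [] => rw [shiftFun_nil, inner_zero_left]
    | d :: v =>
      by_cases hd : d = b
      · subst hd
        rw [shiftFun_cons_ne (fun hh => h hh.symm) _ v, inner_zero_right]
      · rw [shiftFun_not_mem b _ (by rintro ⟨u, hu⟩; exact hd (List.head_eq_of_cons_eq hu).symm),
          inner_zero_left]
  simp only [heq]
  exact tsum_zero

lemma inner_single_shiftlp (b : Bool) (d : E2 H) (f : Fock H) :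
    ⟪lp.single 2 ([] : List Bool) d, shiftlp b f⟫ = 0 := by
  rw [lp.inner_single_left]
  show ⟪d, shiftFun b (⇑f) []⟫ = 0
  rw [shiftFun_nil, inner_zero_right]

lemma inner_shiftlp_single (b : Bool) (d : E2 H) (f : Fock H) :
    ⟪shiftlp b f, lp.single 2 ([] : List Bool) d⟫ = 0 := by
  rw [lp.inner_single_right]
  show ⟪shiftFun b (⇑f) [], d⟫ = 0
  rw [shiftFun_nil, inner_zero_left]

lemma inner_single_single' (d d' : E2 H) :
    ⟪(lp.single 2 ([] : List Bool) d : Fock H), (lp.single 2 ([] : List Bool) d' : Fock H)⟫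
      = ⟪d, d'⟫ := by
  rw [lp.inner_single_left, lp.single_apply_self]

/-! ## The dilation space and operators -/

abbrev Kspace (H : Type u) [NormedAddCommGroup H] [InnerProductSpace ℂ H] [CompleteSpace H] :=
  WithLp 2 (H × Fock H)

def Tb (b : Bool) : H →L[ℂ] H := bif b then T₂ else T₁

lemma emb_false_fst (h : H) : (emb (H := H) false h).fst = h := rfl
lemma emb_false_snd (h : H) : (emb (H := H) false h).snd = 0 := rfl
lemma emb_true_fst (h : H) : (emb (H := H) true h).fst = 0 := rfl
lemma emb_true_snd (h : H) : (emb (H := H) true h).snd = h := rfl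

lemma rowOp_emb (b : Bool) (h : H) : rowOp T₁ T₂ (emb b h) = Tb T₁ T₂ b h := by
  cases b <;>
    simp [rowOp_apply, Tb, emb_false_fst, emb_false_snd, emb_true_fst, emb_true_snd]

lemma inner_emb (b c : Bool) (h k : H) :
    ⟪emb (H := H) b h, emb c k⟫ = if b = c then ⟪h, k⟫ else 0 := by
  cases b <;> cases c <;>
    · rw [WithLp.prod_inner_apply]
      show ⟪_, _⟫ + ⟪_, _⟫ = _
      simp [emb]

def Vfun (b : Bool) (k : Kspace H) : Kspace H :=
  (WithLp.equiv 2 (H × Fock H)).symm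
    (Tb T₁ T₂ b k.fst,
      lp.single 2 ([] : List Bool) (Ddef T₁ T₂ (emb b k.fst)) + shiftlp b k.snd)

lemma single_add' (d d' : E2 H) :
    (lp.single 2 ([] : List Bool) (d + d') : Fock H)
      = lp.single 2 ([] : List Bool) d + lp.single 2 ([] : List Bool) d' := by
  apply lp.ext
  rw [lp.coeFn_add]
  funext j
  rw [Pi.add_apply, lp.single_apply, lp.single_apply, lp.single_apply]
  rw [Pi.single_add, Pi.add_apply]

def Vlin (b : Bool) : Kspace H →ₗ[ℂ] Kspace H where
  toFun := Vfun T₁ T₂ b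
  map_add' k l := by
    simp only [Vfun]
    rw [WithLp.equiv_symm_apply]
    refine Eq.trans ?_ (WithLp.toLp_add ..)
    congr 1
    rw [Prod.mk_add_mk]
    congr 1
    · rw [WithLp.add_fst, map_add]
    · rw [WithLp.add_fst, WithLp.add_snd, map_add, map_add, single_add', shiftlp_add]
      abel
  map_smul' c k := by
    simp only [Vfun, RingHom.id_apply]
    rw [WithLp.equiv_symm_apply]
    refine Eq.trans ?_ (WithLp.toLp_smul ..)
    congr 1
    rw [Prod.smul_mk]
    congr 1
    · rw [WithLp.smul_fst, map_smul]
    · rw [WithLp.smul_fst, WithLp.smul_snd, map_smul, map_smul, lp.single_smul,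
        shiftlp_smul, smul_add]

include hrow in
lemma inner_Vfun (b c : Bool) (k l : Kspace H) :
    ⟪Vfun T₁ T₂ b k, Vfun T₁ T₂ c l⟫ = if b = c then ⟪k, l⟫ else 0 := by
  simp only [Vfun]
  simp only [WithLp.prod_inner_apply, WithLp.equiv_symm_apply, WithLp.ofLp_toLp]
  rw [inner_add_left, inner_add_right, inner_add_right]
  rw [inner_single_single', inner_single_shiftlp, inner_shiftlp_single]
  rw [inner_Ddef T₁ T₂ hrow, rowOp_emb, rowOp_emb, inner_emb]
  by_cases hbc : b = c
  · subst hbc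
    rw [if_pos rfl, if_pos rfl, inner_shiftlp_same]
    show _ = ⟪k.fst, l.fst⟫ + ⟪k.snd, l.snd⟫
    ring
  · rw [if_neg hbc, if_neg hbc, inner_shiftlp_ne hbc]
    ring

def VembLin : H →ₗ[ℂ] Kspace H where
  toFun h := (WithLp.equiv 2 (H × Fock H)).symm (h, 0)
  map_add' x y := by
    rw [WithLp.equiv_symm_apply, ← WithLp.toLp_add]
    congr 1
    rw [Prod.mk_add_mk, add_zero]
  map_smul' c x := by
    rw [RingHom.id_apply, WithLp.equiv_symm_apply, ← WithLp.toLp_smul]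
    congr 1
    rw [Prod.smul_mk, smul_zero]

def Vemb : H →ₗᵢ[ℂ] Kspace H :=
  ⟨VembLin, fun h => WithLp.norm_toLp_fst 2 H (Fock H) h⟩

lemma Vemb_apply (h : H) : Vemb h = (WithLp.equiv 2 (H × Fock H)).symm (h, 0) := rfl

lemma inner_Vemb_left (x : H) (z : Kspace H) : ⟪(Vemb x : Kspace H), z⟫ = ⟪x, z.fst⟫ := by
  simp only [Vemb_apply, WithLp.prod_inner_apply, WithLp.equiv_symm_apply, WithLp.ofLp_toLp,
    inner_zero_left, add_zero]
  rfl

lemma inner_Vemb_right (z : Kspace H) (y : H) : ⟪z, (Vemb y : Kspace H)⟫ = ⟪z.fst, y⟫ := by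
  simp only [Vemb_apply, WithLp.prod_inner_apply, WithLp.equiv_symm_apply, WithLp.ofLp_toLp,
    inner_zero_right, add_zero]
  rfl

include hrow in
lemma Vlin_norm (b : Bool) (k : Kspace H) : ‖Vlin T₁ T₂ b k‖ = ‖k‖ := by
  rw [norm_eq_sqrt_re_inner (𝕜 := ℂ), norm_eq_sqrt_re_inner (𝕜 := ℂ) k]
  congr 2
  have h := inner_Vfun T₁ T₂ hrow b b k k
  rw [if_pos rfl] at h
  exact h

def Vci (b : Bool) : Kspace H →L[ℂ] Kspace H :=
  LinearIsometry.toContinuousLinearMap ⟨Vlin T₁ T₂ b, Vlin_norm T₁ T₂ hrow b⟩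

lemma Vci_apply (b : Bool) (k : Kspace H) : Vci T₁ T₂ hrow b k = Vfun T₁ T₂ b k := rfl

lemma Vfun_fst (b : Bool) (k : Kspace H) :
    (Vfun T₁ T₂ b k).fst = Tb T₁ T₂ b k.fst := rfl

include hrow in
lemma row_isometry (b c : Bool) :
    adjoint (Vci T₁ T₂ hrow b) ∘L Vci T₁ T₂ hrow c
      = if b = c then (1 : Kspace H →L[ℂ] Kspace H) else 0 := by
  ext k
  apply ext_inner_right ℂ
  intro l
  rw [comp_apply, adjoint_inner_left, Vci_apply, Vci_apply]
  have h := inner_Vfun T₁ T₂ hrow c b k l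
  rw [h]
  by_cases hbc : b = c
  · subst hbc
    rw [if_pos rfl, if_pos rfl, ContinuousLinearMap.one_apply]
  · rw [if_neg (fun hh => hbc hh.symm), if_neg hbc, zero_apply, inner_zero_left]

include hrow in
lemma coinvariant (b : Bool) (x : H) :
    adjoint (Vci T₁ T₂ hrow b) (Vemb x) = Vemb (adjoint (Tb T₁ T₂ b) x) := by
  apply ext_inner_right ℂ
  intro l
  rw [adjoint_inner_left, Vci_apply, inner_Vemb_left, inner_Vemb_left, Vfun_fst,
    adjoint_inner_left]

include hrow in
lemma compression (b : Bool) (x y : H) :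
    ⟪Vci T₁ T₂ hrow b (Vemb x), (Vemb y : Kspace H)⟫ = ⟪Tb T₁ T₂ b x, y⟫ := by
  rw [Vci_apply, inner_Vemb_right, Vfun_fst]
  rfl

end Frazho


/-- **Frazho's dilation theorem**: every row contraction `(T₁, T₂)` on a complex Hilbert space
`H` dilates to a row isometry `(V₁, V₂)` on a larger Hilbert space `K ⊇ H` such that `H` is
coinvariant (`Vᵢ* H ⊆ H` with `Vᵢ*|_H = Tᵢ*`); in particular `Tᵢ = P_H Vᵢ|_H`. -/
theorem frazho_dilation {H : Type u} [NormedAddCommGroup H] [InnerProductSpace ℂ H]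
    [CompleteSpace H] (T₁ T₂ : H →L[ℂ] H)
    (hrow : ((1 : H →L[ℂ] H) -
      (T₁ ∘L adjoint T₁ + T₂ ∘L adjoint T₂)).IsPositive) :
    ∃ (K : Type u) (_ : NormedAddCommGroup K) (_ : InnerProductSpace ℂ K) (_ : CompleteSpace K)
      (V : H →ₗᵢ[ℂ] K) (V₁ V₂ : K →L[ℂ] K),
      -- `(V₁, V₂)` is a row isometry
      adjoint V₁ ∘L V₁ = 1 ∧ adjoint V₂ ∘L V₂ = 1 ∧
      adjoint V₁ ∘L V₂ = 0 ∧ adjoint V₂ ∘L V₁ = 0 ∧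
      -- `H` is coinvariant and `Vᵢ*` agrees with `Tᵢ*` on `H`
      (∀ x : H, adjoint V₁ (V x) = V (adjoint T₁ x)) ∧
      (∀ x : H, adjoint V₂ (V x) = V (adjoint T₂ x)) ∧
      -- in particular, `Tᵢ` is the compression of `Vᵢ` to `H`
      (∀ x y : H, (inner ℂ (V₁ (V x)) (V y) : ℂ) = inner ℂ (T₁ x) y) ∧
      (∀ x y : H, (inner ℂ (V₂ (V x)) (V y) : ℂ) = inner ℂ (T₂ x) y) := by
  
  refine ⟨Frazho.Kspace H, inferInstance, inferInstance, inferInstance, Frazho.Vemb,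
    Frazho.Vci T₁ T₂ hrow false, Frazho.Vci T₁ T₂ hrow true, ?_, ?_, ?_, ?_, ?_, ?_, ?_, ?_⟩
  · simpa using Frazho.row_isometry T₁ T₂ hrow false false
  · simpa using Frazho.row_isometry T₁ T₂ hrow true true
  · simpa using Frazho.row_isometry T₁ T₂ hrow false true
  · simpa using Frazho.row_isometry T₁ T₂ hrow true false
  · exact fun x => Frazho.coinvariant T₁ T₂ hrow false x
  · exact fun x => Frazho.coinvariant T₁ T₂ hrow true x
  · exact fun x y => Frazho.compression T₁ T₂ hrow false x y
  · exact fun x y => Frazho.compression T₁ T₂ hrow true x y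
end
end
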